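/- For arbitrary (not necessarily positive semidefinite) C^x ∈ ℝ^{n×n} and C^y ∈ ℝ^{m×m}, and for all T, T₀ ∈ ℝ^{n×m}, one has the local quadratic majorization F(T) ≤ F(T₀) + ⟨C^x T₀ C^y + (C^x)^⊤ T₀ (C^y)^⊤, T − T₀⟩ + ‖C^x‖₂ ‖C^y‖₂ ‖T − T₀‖_F². -/
import Mathlib


open scoped BigOperators
open Matrix

noncomputable section

/-- Frobenius inner product of two real `n × m` matrices. -/
def finner {n m : ℕ} (A B : Matrix (Fin n) (Fin m) ℝ) : ℝ :=
  ∑ i, ∑ j, A i j * B i j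

/-- Frobenius norm. -/
def frobNorm {n m : ℕ} (A : Matrix (Fin n) (Fin m) ℝ) : ℝ :=
  Real.sqrt (finner A A)

/-- Operator (spectral) norm of a real matrix, as a linear map between
Euclidean spaces. -/
def l2OpNorm {k l : ℕ} (M : Matrix (Fin k) (Fin l) ℝ) : ℝ :=
  ‖(Matrix.toEuclideanLin M).toContinuousLinearMap‖

open scoped Matrix.Norms.L2Operator

lemma l2OpNorm_eq {k l : ℕ} (M : Matrix (Fin k) (Fin l) ℝ) : l2OpNorm M = ‖M‖ := rfl

lemma l2OpNorm_transpose {k : ℕ} (M : Matrix (Fin k) (Fin k) ℝ) : ‖Mᵀ‖ = ‖M‖ := by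
  rw [← Matrix.l2_opNorm_conjTranspose M]; congr 1

lemma finner_eq_trace {n m : ℕ} (A B : Matrix (Fin n) (Fin m) ℝ) :
    finner A B = Matrix.trace (Aᵀ * B) := by
  simp only [finner, Matrix.trace, Matrix.diag, Matrix.mul_apply, Matrix.transpose_apply]
  exact Finset.sum_comm

lemma finner_comm {n m : ℕ} (A B : Matrix (Fin n) (Fin m) ℝ) : finner A B = finner B A := by
  simp only [finner]; congr 1; ext i; congr 1; ext j; ring

lemma finner_mul_left {n m : ℕ} (M : Matrix (Fin n) (Fin n) ℝ)
    (A B : Matrix (Fin n) (Fin m) ℝ) : finner (M * A) B = finner A (Mᵀ * B) := by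
  rw [finner_eq_trace, finner_eq_trace, Matrix.transpose_mul, Matrix.mul_assoc]

lemma finner_mul_right {n m : ℕ} (N : Matrix (Fin m) (Fin m) ℝ)
    (A B : Matrix (Fin n) (Fin m) ℝ) : finner (A * N) B = finner A (B * Nᵀ) := by
  rw [finner_eq_trace, finner_eq_trace, Matrix.transpose_mul, Matrix.mul_assoc,
    Matrix.trace_mul_comm, Matrix.mul_assoc]

lemma finner_add_left {n m : ℕ} (A B C : Matrix (Fin n) (Fin m) ℝ) :
    finner (A + B) C = finner A C + finner B C := by
  simp [finner, add_mul, Finset.sum_add_distrib]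

lemma finner_add_right {n m : ℕ} (A B C : Matrix (Fin n) (Fin m) ℝ) :
    finner A (B + C) = finner A B + finner A C := by
  rw [finner_comm, finner_add_left, finner_comm B A, finner_comm C A]

lemma finner_self_nonneg {n m : ℕ} (A : Matrix (Fin n) (Fin m) ℝ) : 0 ≤ finner A A := by
  apply Finset.sum_nonneg; intro i _; apply Finset.sum_nonneg; intro j _; exact mul_self_nonneg _

lemma finner_transpose {n m : ℕ} (A B : Matrix (Fin n) (Fin m) ℝ) :
    finner Aᵀ Bᵀ = finner A B := by
  simp only [finner, Matrix.transpose_apply]; exact Finset.sum_comm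

/-- column-wise operator norm bound -/
lemma mulVec_sq_sum_le {k l : ℕ} (M : Matrix (Fin k) (Fin l) ℝ) (v : Fin l → ℝ) :
    ∑ i, (M.mulVec v i)^2 ≤ ‖M‖^2 * ∑ j, (v j)^2 := by
  have h : ‖(EuclideanSpace.equiv (Fin k) ℝ).symm (M *ᵥ v)‖ ≤
      ‖M‖ * ‖(EuclideanSpace.equiv (Fin l) ℝ).symm v‖ :=
    Matrix.l2_opNorm_mulVec M ((EuclideanSpace.equiv (Fin l) ℝ).symm v)
  have h1 : ‖(EuclideanSpace.equiv (Fin k) ℝ).symm (M *ᵥ v)‖^2 = ∑ i, (M.mulVec v i)^2 := by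
    rw [EuclideanSpace.norm_eq, Real.sq_sqrt (by positivity)]; simp [sq_abs]
  have h2 : ‖(EuclideanSpace.equiv (Fin l) ℝ).symm v‖^2 = ∑ j, (v j)^2 := by
    rw [EuclideanSpace.norm_eq, Real.sq_sqrt (by positivity)]; simp [sq_abs]
  calc ∑ i, (M.mulVec v i)^2 = ‖(EuclideanSpace.equiv (Fin k) ℝ).symm (M *ᵥ v)‖^2 := h1.symm
    _ ≤ (‖M‖ * ‖(EuclideanSpace.equiv (Fin l) ℝ).symm v‖)^2 :=
        pow_le_pow_left₀ (norm_nonneg _) h 2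
    _ = ‖M‖^2 * ∑ j, (v j)^2 := by rw [mul_pow, h2]

lemma finner_mul_left_le {n m : ℕ} (M : Matrix (Fin n) (Fin n) ℝ)
    (A : Matrix (Fin n) (Fin m) ℝ) :
    finner (M * A) (M * A) ≤ ‖M‖^2 * finner A A := by
  have key : ∀ j, ∑ i, ((M * A) i j)^2 ≤ ‖M‖^2 * ∑ i, (A i j)^2 := by
    intro j
    have : ∀ i, (M * A) i j = M.mulVec (fun k => A k j) i := by
      intro i; simp [Matrix.mul_apply, Matrix.mulVec, dotProduct]
    simp only [this]
    exact mulVec_sq_sum_le M _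
  calc finner (M * A) (M * A) = ∑ j, ∑ i, ((M * A) i j)^2 := by
        simp only [finner, sq]; exact Finset.sum_comm
    _ ≤ ∑ j, ‖M‖^2 * ∑ i, (A i j)^2 := Finset.sum_le_sum fun j _ => key j
    _ = ‖M‖^2 * finner A A := by
        rw [← Finset.mul_sum]; congr 1
        simp only [finner, sq]; exact Finset.sum_comm

lemma finner_mul_right_le {n m : ℕ} (N : Matrix (Fin m) (Fin m) ℝ)
    (A : Matrix (Fin n) (Fin m) ℝ) :
    finner (A * N) (A * N) ≤ ‖N‖^2 * finner A A := by
  have h := finner_mul_left_le Nᵀ Aᵀ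
  rw [l2OpNorm_transpose, finner_transpose] at h
  calc finner (A * N) (A * N) = finner (A * N)ᵀ (A * N)ᵀ := (finner_transpose _ _).symm
    _ = finner (Nᵀ * Aᵀ) (Nᵀ * Aᵀ) := by rw [Matrix.transpose_mul]
    _ ≤ ‖N‖^2 * finner A A := h

/-- Cauchy–Schwarz for the Frobenius inner product. -/
lemma finner_le_frob {n m : ℕ} (A B : Matrix (Fin n) (Fin m) ℝ) :
    finner A B ≤ frobNorm A * frobNorm B := by
  have hcs : (∑ p : Fin n × Fin m, A p.1 p.2 * B p.1 p.2)^2 ≤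
      (∑ p : Fin n × Fin m, (A p.1 p.2)^2) * (∑ p : Fin n × Fin m, (B p.1 p.2)^2) :=
    Finset.sum_mul_sq_le_sq_mul_sq Finset.univ _ _
  have hA : (∑ p : Fin n × Fin m, (A p.1 p.2)^2) = finner A A := by
    rw [finner]; simp [Fintype.sum_prod_type, sq]
  have hB : (∑ p : Fin n × Fin m, (B p.1 p.2)^2) = finner B B := by
    rw [finner]; simp [Fintype.sum_prod_type, sq]
  have hAB : (∑ p : Fin n × Fin m, A p.1 p.2 * B p.1 p.2) = finner A B := by
    rw [finner]; simp [Fintype.sum_prod_type]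
  rw [hA, hB, hAB] at hcs
  calc finner A B ≤ |finner A B| := le_abs_self _
    _ = Real.sqrt ((finner A B)^2) := (Real.sqrt_sq_eq_abs _).symm
    _ ≤ Real.sqrt (finner A A * finner B B) := Real.sqrt_le_sqrt hcs
    _ = frobNorm A * frobNorm B := by
        rw [frobNorm, frobNorm, Real.sqrt_mul (finner_self_nonneg A)]

lemma frobNorm_sq {n m : ℕ} (A : Matrix (Fin n) (Fin m) ℝ) :
    frobNorm A ^ 2 = finner A A := Real.sq_sqrt (finner_self_nonneg A)

/-- local quadratic majorization of the fused GW quadratic form for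
arbitrary (not necessarily PSD) `Cˣ, Cʸ`. -/
theorem stmt5 {n m : ℕ} (Cx : Matrix (Fin n) (Fin n) ℝ) (Cy : Matrix (Fin m) (Fin m) ℝ)
    (F : Matrix (Fin n) (Fin m) ℝ → ℝ) (hF : ∀ T, F T = finner (Cx * T * Cy) T)
    (T T₀ : Matrix (Fin n) (Fin m) ℝ) :
    F T ≤ F T₀ + finner (Cx * T₀ * Cy + Cxᵀ * T₀ * Cyᵀ) (T - T₀)
        + l2OpNorm Cx * l2OpNorm Cy * frobNorm (T - T₀) ^ 2 := by
  set Δ := T - T₀ with hΔ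
  have hT : T = T₀ + Δ := by rw [hΔ]; abel
  -- algebraic expansion
  have expand : F T = F T₀ + finner (Cx * T₀ * Cy + Cxᵀ * T₀ * Cyᵀ) Δ
      + finner (Cx * Δ * Cy) Δ := by
    rw [hF, hF, hT]
    have e1 : Cx * (T₀ + Δ) * Cy = Cx * T₀ * Cy + Cx * Δ * Cy := by
      rw [Matrix.mul_add, Matrix.add_mul]
    rw [e1, finner_add_left, finner_add_right, finner_add_right, finner_add_left]
    have e2 : finner (Cx * Δ * Cy) T₀ = finner (Cxᵀ * T₀ * Cyᵀ) Δ := by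
      rw [finner_mul_right, finner_mul_left, finner_comm]
      rw [Matrix.mul_assoc]
    rw [e2]; ring
  rw [expand]
  have hq : finner (Cx * Δ * Cy) Δ ≤ l2OpNorm Cx * l2OpNorm Cy * frobNorm Δ ^ 2 := by
    have h1 : finner (Cx * Δ * Cy) Δ ≤ frobNorm (Cx * Δ * Cy) * frobNorm Δ :=
      finner_le_frob _ _
    have h2 : finner (Cx * Δ * Cy) (Cx * Δ * Cy) ≤ (‖Cx‖ * ‖Cy‖)^2 * finner Δ Δ := by
      calc finner (Cx * Δ * Cy) (Cx * Δ * Cy) ≤ ‖Cy‖^2 * finner (Cx * Δ) (Cx * Δ) :=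
            finner_mul_right_le Cy (Cx * Δ)
        _ ≤ ‖Cy‖^2 * (‖Cx‖^2 * finner Δ Δ) := by
            apply mul_le_mul_of_nonneg_left (finner_mul_left_le Cx Δ) (by positivity)
        _ = (‖Cx‖ * ‖Cy‖)^2 * finner Δ Δ := by ring
    have h3 : frobNorm (Cx * Δ * Cy) ≤ ‖Cx‖ * ‖Cy‖ * frobNorm Δ := by
      rw [frobNorm, frobNorm]
      calc Real.sqrt (finner (Cx * Δ * Cy) (Cx * Δ * Cy))
          ≤ Real.sqrt ((‖Cx‖ * ‖Cy‖)^2 * finner Δ Δ) := Real.sqrt_le_sqrt h2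
        _ = ‖Cx‖ * ‖Cy‖ * Real.sqrt (finner Δ Δ) := by
            rw [Real.sqrt_mul (by positivity), Real.sqrt_sq (by positivity)]
    calc finner (Cx * Δ * Cy) Δ ≤ frobNorm (Cx * Δ * Cy) * frobNorm Δ := h1
      _ ≤ (‖Cx‖ * ‖Cy‖ * frobNorm Δ) * frobNorm Δ := by
          apply mul_le_mul_of_nonneg_right h3 (Real.sqrt_nonneg _)
      _ = l2OpNorm Cx * l2OpNorm Cy * frobNorm Δ ^ 2 := by
          rw [l2OpNorm_eq, l2OpNorm_eq]; ring
  linarith
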